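/- Let G be a finite simple graph that is not a complete graph. Then the treedepth of G equals the minimum, over all minimal separators S of G, of |S| + td(G ∖ S). -/

import Mathlib

open SimpleGraph

attribute [local instance] Classical.propDecidable

noncomputable section

/-- A rooted forest on a vertex type `V`, given by a parent map together with a
depth function (the depth of a root is `1`, and the depth of a child is the depth
of its parent plus one).  The existence of such a depth function guarantees that
the parent map is acyclic, i.e. that the structure really is a rooted forest. -/
structure RootedForest (V : Type) where
  parent : V → Option V
  depth : V → ℕ
  depth_root : ∀ v, parent v = none → depth v = 1
  depth_parent : ∀ v u, parent v = some u → depth v = depth u + 1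

namespace RootedForest

variable {V : Type}

/-- `T.Ancestor u v` means that `u` is a (reflexive) ancestor of `v` in `T`. -/
def Ancestor (T : RootedForest V) (u v : V) : Prop :=
  Relation.ReflTransGen (fun a b => T.parent a = some b) v u

/-- The height of a rooted forest: the maximum number of vertices on a
root-to-leaf path of one of its trees (0 for the empty forest). -/
def height (T : RootedForest V) [Fintype V] : ℕ :=
  Finset.univ.sup T.depth

/-- The number of children of a vertex. -/
def childCount (T : RootedForest V) [Fintype V] (u : V) : ℕ :=
  (Finset.univ.filter (fun v => T.parent v = some u)).card

/-- The set of vertices of depth at most `d` in `T`. -/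
def top (T : RootedForest V) (d : ℕ) : Set V := {v | T.depth v ≤ d}

/-- `T` is a rooted tree if it has exactly one root. -/
def IsTree (T : RootedForest V) : Prop := ∃! r, T.parent r = none

/-- The top separator of a rooted tree `T`: if no vertex of `T` has more than one
child (i.e. `T` is a path), it is all of `V(T)`; otherwise it is the set of
vertices of depth at most the depth of the minimum-depth vertex having more than
one child. -/
def topSep (T : RootedForest V) [Fintype V] : Finset V :=
  if _ : ∃ p, 2 ≤ T.childCount p then
    Finset.univ.filter
      (fun v => T.depth v ≤ sInf {d | ∃ p, 2 ≤ T.childCount p ∧ T.depth p = d})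
  else Finset.univ

end RootedForest

/-- `T` is a treedepth decomposition of `G`: a rooted forest on the vertex set of
`G` such that the endpoints of every edge of `G` are in ancestor-descendant
relation. -/
def IsTDDecomp {V : Type} (G : SimpleGraph V) (T : RootedForest V) : Prop :=
  ∀ u v, G.Adj u v → T.Ancestor u v ∨ T.Ancestor v u

/-- The treedepth of a finite graph: the minimum height of a treedepth
decomposition of `G`. -/
def treedepth {V : Type} [Fintype V] (G : SimpleGraph V) : ℕ :=
  sInf {h | ∃ T : RootedForest V, IsTDDecomp G T ∧ T.height = h}

/-- `(T, f)` is a tree decomposition of `G`. -/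
def IsTreeDecomp {V ι : Type} (G : SimpleGraph V) (T : SimpleGraph ι)
    (f : ι → Finset V) : Prop :=
  T.IsTree ∧
  (∀ v, ∃ i, v ∈ f i) ∧
  (∀ u v, G.Adj u v → ∃ i, u ∈ f i ∧ v ∈ f i) ∧
  (∀ v, (T.induce {i | v ∈ f i}).Connected)

/-- The treewidth of a finite graph: the minimum over all tree decompositions of
(maximum bag size minus one), phrased as the least `w` such that `G` has a tree
decomposition all of whose bags have at most `w + 1` vertices. -/
def treewidth {V : Type} [Fintype V] (G : SimpleGraph V) : ℕ :=
  sInf {w | ∃ (ι : Type) (_ : Fintype ι) (T : SimpleGraph ι) (f : ι → Finset V),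
    IsTreeDecomp G T f ∧ ∀ i, (f i).card ≤ w + 1}

/-- `S` is an `a`-`b` separator of `G`: `a, b ∉ S` and every walk from `a` to `b`
meets `S` (i.e. `a` and `b` lie in different connected components of `G ∖ S`). -/
def IsABSep {V : Type} (G : SimpleGraph V) (a b : V) (S : Finset V) : Prop :=
  a ∉ S ∧ b ∉ S ∧ ∀ w : G.Walk a b, ∃ x ∈ w.support, x ∈ S

/-- `S` is a minimal separator of `G`: for some vertices `a, b`, it is an
`a`-`b` separator no proper subset of which is an `a`-`b` separator. -/
def IsMinSep {V : Type} (G : SimpleGraph V) (S : Finset V) : Prop :=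
  ∃ a b, IsABSep G a b S ∧ ∀ S' ⊂ S, ¬ IsABSep G a b S'

/-- The grid graph `P_m × P_n`, with vertex set
`{(i,j) : 1 ≤ i ≤ n, 1 ≤ j ≤ m}` and edges between vertices at ℓ1-distance 1. -/
def gridGraph (n m : ℕ) : SimpleGraph (Fin n × Fin m) where
  Adj a b := Nat.dist a.1.val b.1.val + Nat.dist a.2.val b.2.val = 1
  symm := ⟨by
    intro a b h
    try dsimp only at h ⊢
    rwa [Nat.dist_comm b.1.val, Nat.dist_comm b.2.val]⟩
  loopless := ⟨by intro a h; simp [Nat.dist_self] at h⟩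


/-- Vertices of the broom: grid vertices plus, for each row `i`, a path on `2^k - 1` vertices. -/
abbrev BroomV (n m k : ℕ) : Type := (Fin n × Fin m) ⊕ (Fin n × Fin (2 ^ k - 1))

/-- The broom `B_{n,m,k}`. -/
def broom (n m k : ℕ) : SimpleGraph (BroomV n m k) :=
  SimpleGraph.fromRel (fun x y =>
    match x, y with
    | .inl a, .inl b => (gridGraph n m).Adj a b
    | .inl a, .inr b => a.1 = b.1 ∧ a.2.val = m - 1 ∧ b.2.val = 0
    | .inr a, .inr b => a.1 = b.1 ∧ a.2.val + 1 = b.2.val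
    | .inr _, .inl _ => False)

/-- Vertices of the double broom: grid vertices plus, for each row `i`, a path
attached at `(i,1)` (first summand) and a path attached at `(i,m)` (second summand). -/
abbrev DBroomV (n m k : ℕ) : Type :=
  (Fin n × Fin m) ⊕ (Fin n × Fin (2 ^ k - 1)) ⊕ (Fin n × Fin (2 ^ k - 1))

/-- The double broom `D_{n,m,k}`. -/
def dbroom (n m k : ℕ) : SimpleGraph (DBroomV n m k) :=
  SimpleGraph.fromRel (fun x y =>
    match x, y with
    | .inl a, .inl b => (gridGraph n m).Adj a b
    | .inl a, .inr (.inl b) => a.1 = b.1 ∧ a.2.val = 0 ∧ b.2.val = 0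
    | .inl a, .inr (.inr b) => a.1 = b.1 ∧ a.2.val = m - 1 ∧ b.2.val = 0
    | .inr (.inl a), .inr (.inl b) => a.1 = b.1 ∧ a.2.val + 1 = b.2.val
    | .inr (.inr a), .inr (.inr b) => a.1 = b.1 ∧ a.2.val + 1 = b.2.val
    | _, _ => False)

/-- Vertices of the graph `G_{n,m,k,l}`: grid vertices, plus a path on `2^k - 1`
vertices for every triple (row `i`, end `e ∈ {1,m}`, vertex `w ∈ W`), plus the
set `W` of `l` new vertices. -/
abbrev CornerV (n m k l : ℕ) : Type :=
  (Fin n × Fin m) ⊕ ((Fin n × Fin 2 × Fin l) × Fin (2 ^ k - 1)) ⊕ Fin l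

/-- The graph `G_{n,m,k,l}`. -/
def corner (n m k l : ℕ) : SimpleGraph (CornerV n m k l) :=
  SimpleGraph.fromRel (fun x y =>
    match x, y with
    | .inl a, .inl b => (gridGraph n m).Adj a b
    | .inl a, .inr (.inl (⟨i, e, _⟩, t)) =>
        a.1 = i ∧ t.val = 0 ∧
          ((e.val = 0 ∧ a.2.val = 0) ∨ (e.val = 1 ∧ a.2.val = m - 1))
    | .inr (.inl (p, t)), .inr (.inl (q, s)) => p = q ∧ t.val + 1 = s.val
    | .inr (.inl (⟨_, _, w⟩, t)), .inr (.inr w') => w = w' ∧ t.val = 2 ^ k - 2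
    | _, _ => False)

/-- `H` is a minor of `G`: there are pairwise disjoint connected branch sets in
`G`, one for each vertex of `H`, such that adjacent vertices of `H` have
adjacent branch sets. -/
def IsMinor {W V : Type} (H : SimpleGraph W) (G : SimpleGraph V) : Prop :=
  ∃ B : W → Set V,
    (∀ w, (G.induce (B w)).Connected) ∧
    (∀ w w', w ≠ w' → Disjoint (B w) (B w')) ∧
    (∀ w w', H.Adj w w' → ∃ u ∈ B w, ∃ v ∈ B w', G.Adj u v)

/-- A graph is chordal if it has no induced cycle of length four or more. -/
def IsChordal {V : Type} (G : SimpleGraph V) : Prop :=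
  ∀ c : ℕ, 4 ≤ c → IsEmpty (SimpleGraph.cycleGraph c ↪g G)

/-- A graph is a cograph if it has no induced path on four vertices. -/
def IsCograph {V : Type} (G : SimpleGraph V) : Prop :=
  IsEmpty (SimpleGraph.pathGraph 4 ↪g G)

/-- A graph is outerplanar iff it contains neither `K₄` nor `K_{2,3}` as a minor. -/
def IsOuterplanar {V : Type} (G : SimpleGraph V) : Prop :=
  ¬ IsMinor (⊤ : SimpleGraph (Fin 4)) G ∧
  ¬ IsMinor (completeBipartiteGraph (Fin 2) (Fin 3)) G

/-- The graph obtained from `G'` and the path on `p` vertices by adding a single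
edge between `u ∈ V(G')` and a path vertex `v`. -/
def attachPath {V' : Type} (G' : SimpleGraph V') (p : ℕ) (u : V') (v : Fin p) :
    SimpleGraph (V' ⊕ Fin p) :=
  SimpleGraph.fromRel (fun x y =>
    match x, y with
    | .inl a, .inl b => G'.Adj a b
    | .inr a, .inr b => a.val + 1 = b.val
    | .inl a, .inr b => a = u ∧ b = v
    | .inr _, .inl _ => False)


/-!
Stacking the vertices of any `S` as a path above an optimal decomposition of `G ∖ S` shows
`td G ≤ |S| + td (G ∖ S)`. Conversely, fix an optimal decomposition `T` and call `s` a trunk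
vertex if it is an ancestor of every vertex at least as deep as `s`. Unless every vertex is in
the trunk (then `T` is a path, and any minimal separator will do), the trunk separates a
shallowest vertex outside it from another vertex of the same depth, so it contains a minimal
separator `S`. Deleting `S` from `T` lowers each remaining vertex `v` by the number of vertices
of `S` above `v`, while the other vertices of `S` occupy distinct depths below `v`; hence every
vertex of `T ∖ S` has depth at most `height T - |S|`.
-/

namespace RootedForest

section Ancestors

variable {V : Type} {T : RootedForest V}

lemma one_le_depth (T : RootedForest V) (v : V) : 1 ≤ T.depth v := by
  cases h : T.parent v with
  | none => rw [T.depth_root v h]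
  | some u => rw [T.depth_parent v u h]; omega

lemma ancestor_refl (v : V) : T.Ancestor v v := Relation.ReflTransGen.refl

lemma ancestor_of_parent_eq {u v : V} (h : T.parent v = some u) : T.Ancestor u v :=
  Relation.ReflTransGen.single h

lemma Ancestor.of_parent_eq {u v w : V} (huv : T.Ancestor u v) (h : T.parent w = some v) :
    T.Ancestor u w :=
  Relation.ReflTransGen.head h huv

lemma Ancestor.trans {u v w : V} (huv : T.Ancestor u v) (hvw : T.Ancestor v w) :
    T.Ancestor u w :=
  Relation.ReflTransGen.trans hvw huv

lemma Ancestor.depth_le {u v : V} (h : T.Ancestor u v) : T.depth u ≤ T.depth v := by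
  induction h with
  | refl => exact le_rfl
  | tail _ hstep ih => rw [T.depth_parent _ _ hstep] at ih; omega

lemma Ancestor.eq_of_depth_le {u v : V} (h : T.Ancestor u v) (hd : T.depth v ≤ T.depth u) :
    u = v := by
  rcases h.cases_head with rfl | ⟨w, hw, hwu⟩
  · rfl
  · have := Ancestor.depth_le (T := T) hwu
    rw [T.depth_parent _ _ hw] at hd
    omega

lemma Ancestor.total {u w v : V} (hu : T.Ancestor u v) (hw : T.Ancestor w v) :
    T.Ancestor u w ∨ T.Ancestor w u := by
  induction hw using Relation.ReflTransGen.head_induction_on with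
  | refl => exact Or.inl hu
  | head hstep htail ih =>
    rcases hu.cases_head with rfl | ⟨x, hx, hxu⟩
    · exact Or.inr (Relation.ReflTransGen.head hstep htail)
    · rw [hstep, Option.some_inj] at hx
      subst hx
      exact ih hxu

lemma exists_ancestor_depth_eq (v : V) {i : ℕ} (hi : 1 ≤ i) (hiv : i ≤ T.depth v) :
    ∃ a, T.Ancestor a v ∧ T.depth a = i := by
  obtain ⟨k, hk⟩ := Nat.exists_eq_add_of_le hiv
  induction k generalizing v with
  | zero => exact ⟨v, ancestor_refl v, by omega⟩
  | succ k ih =>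
    cases h : T.parent v with
    | none => have := T.depth_root v h; omega
    | some u =>
      have hu := T.depth_parent v u h
      obtain ⟨a, hau, ha⟩ := ih u (by omega) (by omega)
      exact ⟨a, hau.of_parent_eq h, ha⟩

/-- Trunk vertices have pairwise distinct depths and lie on a single root path. -/
def trunk (T : RootedForest V) : Set V :=
  {s | ∀ v, T.depth s ≤ T.depth v → T.Ancestor s v}

lemma mem_trunk_of_depth_eq_imp_eq {s : V} (h : ∀ v, T.depth v = T.depth s → v = s) :
    s ∈ T.trunk := by
  intro v hv
  obtain ⟨a, hav, ha⟩ := exists_ancestor_depth_eq v (T.one_le_depth s) hv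
  rwa [← h a ha]

lemma ancestor_or_ancestor_of_mem_trunk {s t : V} (hs : s ∈ T.trunk) (ht : t ∈ T.trunk) :
    T.Ancestor s t ∨ T.Ancestor t s :=
  (le_total (T.depth s) (T.depth t)).imp (hs t) (ht s)

lemma injOn_depth_trunk : Set.InjOn T.depth T.trunk :=
  fun _ hs t _ hst => (hs t hst.le).eq_of_depth_le hst.ge

lemma card_le_height_sub_of_subset_trunk [Fintype V] {S : Finset V} (hS : ↑S ⊆ T.trunk)
    {d : ℕ} (hd : ∀ s ∈ S, d < T.depth s) : S.card ≤ T.height - d := by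
  calc S.card ≤ (Finset.Ioc d T.height).card :=
        Finset.card_le_card_of_injOn T.depth
          (fun s hs => Finset.mem_Ioc.2 ⟨hd s hs, Finset.le_sup (Finset.mem_univ s)⟩)
          (injOn_depth_trunk.mono hS)
    _ = T.height - d := Nat.card_Ioc d T.height

end Ancestors

section Stack

variable {V : Type}

def discrete (V : Type) : RootedForest V where
  parent _ := none
  depth _ := 1
  depth_root _ _ := rfl
  depth_parent _ _ h := nomatch h

/-- `S`, ordered by `S.equivFin`, laid out as a path: its vertex at depth `j`, counted from `1`. -/
def pathVertex (S : Finset V) (j : ℕ) : Option V :=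
  if h : 0 < j ∧ j ≤ S.card then some (S.equivFin.symm ⟨j - 1, by omega⟩) else none

lemma pathVertex_eq_none_iff {S : Finset V} {j : ℕ} :
    pathVertex S j = none ↔ ¬ (0 < j ∧ j ≤ S.card) := by
  unfold pathVertex; split_ifs <;> simp_all

lemma exists_of_pathVertex_eq_some {S : Finset V} {j : ℕ} {u : V} (h : pathVertex S j = some u) :
    ∃ hu : u ∈ S, (S.equivFin ⟨u, hu⟩ : ℕ) + 1 = j := by
  unfold pathVertex at h
  split_ifs at h with hj
  rw [Option.some_inj] at h
  subst h
  exact ⟨Subtype.mem _, by simp only [Subtype.coe_eta, Equiv.apply_symm_apply]; omega⟩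

/-- The path `pathVertex S` with the roots of `T` hung below its last vertex. -/
def stack (S : Finset V) (T : RootedForest {v : V | v ∉ S}) : RootedForest V where
  parent v :=
    if h : v ∈ S then pathVertex S (S.equivFin ⟨v, h⟩)
    else ((T.parent ⟨v, h⟩).map Subtype.val).or (pathVertex S S.card)
  depth v := if h : v ∈ S then S.equivFin ⟨v, h⟩ + 1 else S.card + T.depth ⟨v, h⟩
  depth_root v h := by
    by_cases hv : v ∈ S
    · simp only [hv, dite_true, pathVertex_eq_none_iff] at h ⊢
      have := (S.equivFin ⟨v, hv⟩).isLt
      omega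
    · simp only [hv, dite_false, Option.or_eq_none_iff, Option.map_eq_none_iff,
        pathVertex_eq_none_iff] at h ⊢
      rw [T.depth_root _ h.1]
      have := S.card.zero_le
      omega
  depth_parent v u h := by
    by_cases hv : v ∈ S
    · simp only [hv, dite_true] at h ⊢
      obtain ⟨hu, hu'⟩ := exists_of_pathVertex_eq_some h
      simp only [hu, dite_true]
      omega
    · simp only [hv, dite_false] at h ⊢
      cases hp : T.parent ⟨v, hv⟩ with
      | none =>
        simp only [hp, Option.map_none, Option.none_or] at h
        obtain ⟨hu, hu'⟩ := exists_of_pathVertex_eq_some h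
        simp only [hu, dite_true, T.depth_root _ hp]
        omega
      | some w =>
        simp only [hp, Option.map_some, Option.some_or, Option.some_inj] at h
        subst h
        have hw : (w : V) ∉ S := w.2
        simp only [hw, dite_false, Subtype.coe_eta, T.depth_parent _ _ hp]
        omega

variable {S : Finset V} {T : RootedForest {v : V | v ∉ S}}

lemma depth_stack_of_mem {v : V} (hv : v ∈ S) :
    (T.stack S).depth v = S.equivFin ⟨v, hv⟩ + 1 :=
  dif_pos hv

lemma depth_stack_of_notMem {v : V} (hv : v ∉ S) :
    (T.stack S).depth v = S.card + T.depth ⟨v, hv⟩ :=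
  dif_neg hv

lemma parent_stack_of_notMem {v : V} (hv : v ∉ S) :
    (T.stack S).parent v = ((T.parent ⟨v, hv⟩).map Subtype.val).or (pathVertex S S.card) :=
  dif_neg hv

lemma mem_trunk_stack {s : V} (hs : s ∈ S) : s ∈ (T.stack S).trunk := by
  refine mem_trunk_of_depth_eq_imp_eq fun v hv => ?_
  rw [depth_stack_of_mem hs] at hv
  by_cases hvS : v ∈ S
  · rw [depth_stack_of_mem hvS, add_left_inj, Fin.val_inj, S.equivFin.apply_eq_iff_eq] at hv
    exact congrArg Subtype.val hv
  · have := (S.equivFin ⟨s, hs⟩).isLt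
    rw [depth_stack_of_notMem hvS] at hv
    have := T.one_le_depth ⟨v, hvS⟩
    omega

lemma Ancestor.stack {u v : {v : V | v ∉ S}} (h : T.Ancestor u v) :
    (T.stack S).Ancestor u v := by
  refine Relation.ReflTransGen.lift Subtype.val (fun x y hxy => ?_) _ _ h
  have hx : (x : V) ∉ S := x.2
  change (T.stack S).parent x = some y
  rw [parent_stack_of_notMem hx, Subtype.coe_eta, hxy]
  rfl

lemma height_stack_le [Fintype V] : (T.stack S).height ≤ S.card + T.height := by
  refine Finset.sup_le fun v _ => ?_
  by_cases hv : v ∈ S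
  · rw [depth_stack_of_mem hv]
    have := (S.equivFin ⟨v, hv⟩).isLt
    omega
  · rw [depth_stack_of_notMem hv]
    exact Nat.add_le_add_left (Finset.le_sup (Finset.mem_univ _)) _

lemma _root_.IsTDDecomp.stack {G : SimpleGraph V} (hT : IsTDDecomp (G.induce {v | v ∉ S}) T) :
    IsTDDecomp G (T.stack S) := by
  have of_mem : ∀ u v, u ∈ S → (T.stack S).Ancestor u v ∨ (T.stack S).Ancestor v u := by
    intro u v hu
    by_cases hv : v ∈ S
    · exact ancestor_or_ancestor_of_mem_trunk (mem_trunk_stack hu) (mem_trunk_stack hv)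
    · refine Or.inl (mem_trunk_stack hu v ?_)
      rw [depth_stack_of_mem hu, depth_stack_of_notMem hv]
      have := (S.equivFin ⟨u, hu⟩).isLt
      omega
  intro u v huv
  by_cases hu : u ∈ S
  · exact of_mem u v hu
  by_cases hv : v ∈ S
  · exact (of_mem v u hv).symm
  exact (hT ⟨u, hu⟩ ⟨v, hv⟩ huv).imp Ancestor.stack Ancestor.stack

end Stack

section Restrict

variable {V : Type} {T : RootedForest V}

def nearestAncIn (T : RootedForest V) (K : Set V) (v : V) : Option K :=
  match h : T.parent v with
  | none => none
  | some u =>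
    have : T.depth u < T.depth v := by rw [T.depth_parent v u h]; omega
    if hu : u ∈ K then some ⟨u, hu⟩ else T.nearestAncIn K u
termination_by T.depth v

lemma nearestAncIn_of_parent_eq_none {K : Set V} {v : V} (h : T.parent v = none) :
    T.nearestAncIn K v = none := by
  rw [nearestAncIn.eq_def]
  split <;> simp_all

lemma nearestAncIn_of_parent_eq_some {K : Set V} {u v : V} (h : T.parent v = some u) :
    T.nearestAncIn K v = if hu : u ∈ K then some ⟨u, hu⟩ else T.nearestAncIn K u := by
  rw [nearestAncIn.eq_def]
  split <;> simp_all

variable [Fintype V]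

def strictAnc (T : RootedForest V) (v : V) : Finset V :=
  Finset.univ.filter fun u => u ≠ v ∧ T.Ancestor u v

lemma mem_strictAnc {u v : V} : u ∈ T.strictAnc v ↔ u ≠ v ∧ T.Ancestor u v := by
  simp [strictAnc]

lemma depth_lt_of_mem_strictAnc {u v : V} (h : u ∈ T.strictAnc v) : T.depth u < T.depth v := by
  rw [mem_strictAnc] at h
  exact lt_of_le_of_ne h.2.depth_le fun hd => h.1 (h.2.eq_of_depth_le hd.ge)

lemma strictAnc_of_parent_eq_none {v : V} (h : T.parent v = none) : T.strictAnc v = ∅ := by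
  refine Finset.eq_empty_of_forall_notMem fun u hu => ?_
  obtain ⟨hne, huv⟩ := mem_strictAnc.1 hu
  rcases huv.cases_head with rfl | ⟨w, hw, -⟩
  · exact hne rfl
  · simp [h] at hw

lemma strictAnc_of_parent_eq_some {u v : V} (h : T.parent v = some u) :
    T.strictAnc v = insert u (T.strictAnc u) := by
  have hd := T.depth_parent v u h
  ext x
  simp only [Finset.mem_insert, mem_strictAnc]
  constructor
  · rintro ⟨hxv, hx⟩
    rcases hx.cases_head with rfl | ⟨w, hw, hxw⟩
    · exact absurd rfl hxv
    · rw [h, Option.some_inj] at hw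
      subst hw
      exact (eq_or_ne x u).imp_right fun hxu => ⟨hxu, hxw⟩
  · rintro (rfl | ⟨-, hx⟩)
    · exact ⟨fun e => by subst e; omega, ancestor_of_parent_eq h⟩
    · exact ⟨fun e => by subst e; have := hx.depth_le; omega, hx.of_parent_eq h⟩

lemma depth_eq_card_strictAnc_add_one (v : V) : T.depth v = (T.strictAnc v).card + 1 := by
  induction' hn : T.depth v using Nat.strong_induction_on with n ih generalizing v
  cases h : T.parent v with
  | none => rw [← hn, T.depth_root v h, strictAnc_of_parent_eq_none h, Finset.card_empty]
  | some u =>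
    have hu := T.depth_parent v u h
    rw [strictAnc_of_parent_eq_some h, Finset.card_insert_of_notMem fun hu' =>
      (depth_lt_of_mem_strictAnc hu').ne rfl, ← ih _ (by omega) u rfl]
    omega

lemma filter_strictAnc_of_nearestAncIn_eq_none {K : Set V} {v : V}
    (h : T.nearestAncIn K v = none) : (T.strictAnc v).filter (· ∈ K) = ∅ := by
  induction v using nearestAncIn.induct T K with
  | case1 v hv => rw [strictAnc_of_parent_eq_none hv, Finset.filter_empty]
  | case2 v u hv _ hu => simp [nearestAncIn_of_parent_eq_some hv, hu] at h
  | case3 v u hv _ hu ih =>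
    rw [nearestAncIn_of_parent_eq_some hv, dif_neg hu] at h
    rw [strictAnc_of_parent_eq_some hv, Finset.filter_insert, if_neg hu, ih h]

lemma filter_strictAnc_of_nearestAncIn_eq_some {K : Set V} {v : V} {u : K}
    (h : T.nearestAncIn K v = some u) :
    (T.strictAnc v).filter (· ∈ K) = insert ↑u ((T.strictAnc u).filter (· ∈ K)) := by
  induction v using nearestAncIn.induct T K with
  | case1 v hv => simp [nearestAncIn_of_parent_eq_none hv] at h
  | case2 v w hv _ hw =>
    rw [nearestAncIn_of_parent_eq_some hv, dif_pos hw, Option.some_inj] at h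
    subst h
    rw [strictAnc_of_parent_eq_some hv, Finset.filter_insert, if_pos hw]
  | case3 v w hv _ hw ih =>
    rw [nearestAncIn_of_parent_eq_some hv, dif_neg hw] at h
    rw [strictAnc_of_parent_eq_some hv, Finset.filter_insert, if_neg hw, ih h]

lemma nearestAncIn_mem_strictAnc {K : Set V} {v : V} {u : K} (h : T.nearestAncIn K v = some u) :
    ↑u ∈ T.strictAnc v :=
  (Finset.mem_filter.1 ((filter_strictAnc_of_nearestAncIn_eq_some h).symm ▸
    Finset.mem_insert_self _ _)).1

def restrict (T : RootedForest V) (K : Set V) : RootedForest K where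
  parent v := T.nearestAncIn K v
  depth v := ((T.strictAnc v).filter (· ∈ K)).card + 1
  depth_root v h := by
    simp only [filter_strictAnc_of_nearestAncIn_eq_none h, Finset.card_empty]
  depth_parent v u h := by
    rw [filter_strictAnc_of_nearestAncIn_eq_some h, Finset.card_insert_of_notMem]
    simp [mem_strictAnc]

lemma Ancestor.restrict {K : Set V} {u v : K} (h : T.Ancestor u v) :
    (T.restrict K).Ancestor u v := by
  induction' hn : T.depth v using Nat.strong_induction_on with n ih generalizing v
  by_cases huv : u = v
  · rw [huv]; exact ancestor_refl v
  have hu : ↑u ∈ (T.strictAnc v).filter (· ∈ K) :=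
    Finset.mem_filter.2 ⟨mem_strictAnc.2 ⟨Subtype.coe_ne_coe.2 huv, h⟩, u.2⟩
  cases hw : T.nearestAncIn K v with
  | none => simp [filter_strictAnc_of_nearestAncIn_eq_none hw] at hu
  | some w =>
    have hstep : (T.restrict K).parent v = some w := hw
    rw [filter_strictAnc_of_nearestAncIn_eq_some hw, Finset.mem_insert] at hu
    rcases hu with hu | hu
    · rw [Subtype.ext hu]; exact ancestor_of_parent_eq hstep
    · exact (ih _ (hn ▸ depth_lt_of_mem_strictAnc (nearestAncIn_mem_strictAnc hw))
        (mem_strictAnc.1 (Finset.mem_filter.1 hu).1).2 rfl).of_parent_eq hstep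

lemma _root_.IsTDDecomp.restrict {G : SimpleGraph V} (hT : IsTDDecomp G T) (K : Set V) :
    IsTDDecomp (G.induce K) (T.restrict K) :=
  fun u v huv => (hT u v huv).imp Ancestor.restrict Ancestor.restrict

lemma depth_restrict (K : Set V) (v : K) :
    (T.restrict K).depth v = ((T.strictAnc v).filter (· ∈ K)).card + 1 :=
  rfl

/-- Deleting `S` removes, above each remaining vertex `v`, exactly the vertices of `S` that are
strict ancestors of `v`; the others are trunk vertices deeper than `v`. -/
lemma depth_restrict_add_card_le {S : Finset V} (hS : ↑S ⊆ T.trunk)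
    (v : {v : V | v ∉ S}) : (T.restrict {v | v ∉ S}).depth v + S.card ≤ T.height := by
  have hrestrict : (T.restrict {v | v ∉ S}).depth v = (T.strictAnc v \ S).card + 1 := by
    rw [depth_restrict]
    congr 2
    ext
    simp
  have hdeep : ∀ s ∈ S \ T.strictAnc v, T.depth v < T.depth s := fun s hs => by
    obtain ⟨hsS, hsA⟩ := Finset.mem_sdiff.1 hs
    by_contra! hle
    exact hsA (mem_strictAnc.2 ⟨fun e => v.2 (e ▸ hsS), hS hsS v hle⟩)
  have hSA := card_le_height_sub_of_subset_trunk
    (subset_trans (Finset.coe_subset.2 Finset.sdiff_subset) hS) hdeep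
  have := Finset.card_sdiff_add_card_inter (T.strictAnc v) S
  have := Finset.card_inter_add_card_sdiff S (T.strictAnc v)
  rw [Finset.inter_comm] at this
  have := T.depth_eq_card_strictAnc_add_one v
  have : T.depth v ≤ T.height := Finset.le_sup (Finset.mem_univ _)
  omega

end Restrict

end RootedForest

section Treedepth

variable {V : Type} [Fintype V] {G : SimpleGraph V}

lemma treedepth_le_height {T : RootedForest V} (hT : IsTDDecomp G T) : treedepth G ≤ T.height :=
  Nat.sInf_le ⟨T, hT, rfl⟩

variable (G) in
lemma exists_isTDDecomp_height_eq_treedepth :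
    ∃ T : RootedForest V, IsTDDecomp G T ∧ T.height = treedepth G :=
  Nat.sInf_mem (s := {h | ∃ T : RootedForest V, IsTDDecomp G T ∧ T.height = h})
    ⟨_, (RootedForest.discrete _).stack Finset.univ,
      IsTDDecomp.stack fun u => absurd (Finset.mem_univ u.1) u.2, rfl⟩

variable (G) in
lemma treedepth_le_card_add_treedepth_induce (S : Finset V) :
    treedepth G ≤ S.card + treedepth (G.induce {v | v ∉ S}) := by
  obtain ⟨T, hT, hTh⟩ := exists_isTDDecomp_height_eq_treedepth (G.induce {v | v ∉ S})
  calc treedepth G ≤ (T.stack S).height := treedepth_le_height hT.stack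
    _ ≤ S.card + T.height := RootedForest.height_stack_le
    _ = S.card + treedepth (G.induce {v | v ∉ S}) := by rw [hTh]

lemma card_add_treedepth_induce_le {T : RootedForest V} (hT : IsTDDecomp G T) {S : Finset V}
    (hS : ↑S ⊆ T.trunk) : S.card + treedepth (G.induce {v | v ∉ S}) ≤ T.height := by
  have hrestrict : (T.restrict {v | v ∉ S}).height ≤ T.height - S.card :=
    Finset.sup_le fun v _ => by have := T.depth_restrict_add_card_le hS v; omega
  have hcard := RootedForest.card_le_height_sub_of_subset_trunk hS (d := 0) fun s _ =>
    T.one_le_depth s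
  have := treedepth_le_height (hT.restrict {v | v ∉ S})
  omega

end Treedepth

section Separators

variable {V : Type} {G : SimpleGraph V}

lemma exists_isMinSep_subset {a b : V} {S₀ : Finset V} (h : IsABSep G a b S₀) :
    ∃ S ⊆ S₀, IsMinSep G S := by
  obtain ⟨S, hSS₀, hS, hmin⟩ := exists_minimal_le_of_wellFoundedLT (IsABSep G a b) S₀ h
  exact ⟨S, hSS₀, a, b, hS, fun S' hS' hsep => hS'.2 (hmin hsep hS'.le)⟩

lemma isABSep_compl_pair [Fintype V] {a b : V} (hab : a ≠ b) (hnadj : ¬ G.Adj a b) :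
    IsABSep G a b (Finset.univ \ {a, b}) := by
  refine ⟨by simp, by simp, fun w => ?_⟩
  cases w with
  | nil => exact absurd rfl hab
  | @cons _ x _ h p =>
    refine ⟨x, List.mem_cons_of_mem _ p.start_mem_support, ?_⟩
    simp only [Finset.mem_sdiff, Finset.mem_univ, Finset.mem_insert, Finset.mem_singleton,
      true_and, not_or]
    exact ⟨fun e => G.irrefl (e ▸ h), fun e => hnadj (e ▸ h)⟩

lemma exists_isMinSep_of_ne_top [Fintype V] (hG : G ≠ ⊤) : ∃ S, IsMinSep G S := by
  obtain ⟨a, b, hab, hnadj⟩ := SimpleGraph.ne_top_iff_exists_not_adj.1 hG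
  obtain ⟨S, -, hS⟩ := exists_isMinSep_subset (isABSep_compl_pair hab hnadj)
  exact ⟨S, hS⟩

variable {T : RootedForest V}

lemma IsTDDecomp.ancestor_of_walk_avoiding_trunk (hT : IsTDDecomp G T) {a : V}
    (ha : ∀ z ∉ T.trunk, T.depth a ≤ T.depth z) {x y : V} (w : G.Walk x y)
    (hw : ∀ z ∈ w.support, z ∉ T.trunk) (hx : T.Ancestor a x) : T.Ancestor a y := by
  induction w with
  | nil => exact hx
  | @cons x x' y hadj p ih =>
    refine ih (fun z hz => hw z (List.mem_cons_of_mem _ hz)) ?_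
    have hx' : x' ∉ T.trunk := hw x' (List.mem_cons_of_mem _ p.start_mem_support)
    rcases hT x x' hadj with h | h
    · exact hx.trans h
    · rcases hx.total h with h' | h'
      · exact h'
      · rw [h'.eq_of_depth_le (ha x' hx')]
        exact RootedForest.ancestor_refl a

/-- If the trunk is not everything, it separates a shallowest vertex `a` outside it from a
vertex `b` at the same depth in another subtree. -/
lemma IsTDDecomp.exists_isABSep_trunk [Fintype V] (hT : IsTDDecomp G T)
    (htrunk : T.trunk ≠ Set.univ) :
    ∃ a b, IsABSep G a b T.trunk.toFinset := by
  obtain ⟨a, ha, hmin⟩ := (Finset.univ.filter (· ∉ T.trunk)).exists_min_image T.depth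
    (by simpa [Finset.filter_nonempty_iff, Set.eq_univ_iff_forall] using htrunk)
  replace ha : a ∉ T.trunk := (Finset.mem_filter.1 ha).2
  replace hmin : ∀ z ∉ T.trunk, T.depth a ≤ T.depth z := fun z hz =>
    hmin z (Finset.mem_filter.2 ⟨Finset.mem_univ z, hz⟩)
  obtain ⟨v, hav, hnot⟩ : ∃ v, T.depth a ≤ T.depth v ∧ ¬ T.Ancestor a v := by
    simpa [RootedForest.trunk] using ha
  obtain ⟨b, hbv, hb⟩ := RootedForest.exists_ancestor_depth_eq v (T.one_le_depth a) hav
  have hba : ∀ h : T.Ancestor a b ∨ T.Ancestor b a, False := by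
    rintro (h | h)
    · exact hnot (h.eq_of_depth_le hb.le ▸ hbv)
    · exact hnot (h.eq_of_depth_le hb.ge ▸ hbv)
  refine ⟨a, b, by simpa using ha, by simpa using fun hb' => hba (Or.inr (hb' a hb.le)), ?_⟩
  intro w
  by_contra! hw
  exact hba (Or.inl (hT.ancestor_of_walk_avoiding_trunk hmin w (by simpa using hw)
    (RootedForest.ancestor_refl a)))

end Separators

/-- For a finite simple graph `G` that is not complete, the treedepth
of `G` equals the minimum, over all minimal separators `S` of `G`, of
`|S| + td(G ∖ S)`. -/
theorem statement0 {V : Type} [Fintype V] (G : SimpleGraph V) (hG : G ≠ ⊤) :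
    treedepth G =
      sInf {h : ℕ | ∃ S : Finset V, IsMinSep G S ∧
        h = S.card + treedepth (G.induce {v : V | v ∉ S})} := by
  obtain ⟨S₀, hS₀⟩ := exists_isMinSep_of_ne_top hG
  refine le_antisymm (le_csInf ⟨_, S₀, hS₀, rfl⟩ ?_) ?_
  · rintro _ ⟨S, -, rfl⟩
    exact treedepth_le_card_add_treedepth_induce G S
  obtain ⟨T, hT, hTG⟩ := exists_isTDDecomp_height_eq_treedepth G
  obtain ⟨S, hS, hST⟩ : ∃ S, IsMinSep G S ∧ ↑S ⊆ T.trunk := by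
    by_cases htrunk : T.trunk = Set.univ
    · exact ⟨S₀, hS₀, htrunk ▸ Set.subset_univ _⟩
    · obtain ⟨a, b, hab⟩ := hT.exists_isABSep_trunk htrunk
      obtain ⟨S, hSt, hS⟩ := exists_isMinSep_subset hab
      exact ⟨S, hS, by simpa using hSt⟩
  rw [← hTG]
  exact le_trans (Nat.sInf_le ⟨S, hS, rfl⟩) (card_add_treedepth_induce_le hT hST)

end
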